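/- arXiv:0912.4314 — 4 statements merged into one kernel-verified Lean document; each statement's English description precedes it below -/
import Mathlib

section
/- Let (C^•, d, δ) be a finite bi-graded complex of finite-dimensional complex vector spaces whose combinatorial Laplacian Δ_j is bijective for every j = 0, …, n. Then for every j, the composite δ_{j+1} ∘ d_j maps the subspace im δ_{j+1} ⊆ C^j to itself, the composite d_j ∘ δ_{j+1} maps the subspace im d_j ⊆ C^{j+1} to itself, and the determinants of these two restricted endomorphisms are equal: det(δ_{j+1} ∘ d_j |_{im δ_{j+1}}) = det(d_j ∘ δ_{j+1} |_{im d_j}). -/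
/-!
On `im δ_{j+1}` the Laplacian `Δ_j` acts as `δ_{j+1} d_j`, so its injectivity makes `d_j`
injective on `im δ_{j+1}`; dually `Δ_{j+1}` acts as `d_j δ_{j+1}` on `im d_j`, so `δ_{j+1}` is
injective there (for `j = n` because `C^{n+1} = 0`). Hence `d_j` and `δ_{j+1}` restrict to
mutually injective maps between the two images, which therefore have equal dimension, and the
claim becomes `det (BA) = det (AB)` for square matrices `A`, `B`.
-/

open Module

namespace LinearMap

section Semiring

variable {R M N : Type*} [Semiring R] [AddCommMonoid M] [Module R M] [AddCommMonoid N] [Module R N]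

theorem disjoint_range_ker_of_injective {f : M →ₗ[R] N} {g : N →ₗ[R] M} {Δ : M →ₗ[R] M}
    (hΔ : Function.Injective Δ) (h : Δ ∘ₗ g = g ∘ₗ f ∘ₗ g) : Disjoint (range g) (ker f) := by
  rw [Submodule.disjoint_def]
  rintro _ ⟨y, rfl⟩ hy
  apply hΔ
  rw [map_zero, ← comp_apply, h, comp_apply, comp_apply, mem_ker.1 hy, map_zero]

end Semiring

section Field

variable {K U V : Type*} [Field K] [AddCommGroup U] [Module K U] [AddCommGroup V] [Module K V]
  [FiniteDimensional K U] [FiniteDimensional K V]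

theorem det_comp_comm_of_finrank_eq (h : finrank K U = finrank K V)
    (f : U →ₗ[K] V) (g : V →ₗ[K] U) : LinearMap.det (g ∘ₗ f) = LinearMap.det (f ∘ₗ g) := by
  let bU := finBasis K U
  let bV := (finBasis K V).reindex (finCongr h.symm)
  rw [← det_toMatrix bU, ← det_toMatrix bV, toMatrix_comp bU bV bU, toMatrix_comp bV bU bV,
    Matrix.det_comm]

theorem det_restrict_comp_range_eq (f : U →ₗ[K] V) (g : V →ₗ[K] U)
    (hf : Disjoint (range g) (ker f)) (hg : Disjoint (range f) (ker g))
    (h₁ : ∀ x ∈ range g, (g ∘ₗ f) x ∈ range g) (h₂ : ∀ x ∈ range f, (f ∘ₗ g) x ∈ range f) :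
    LinearMap.det ((g ∘ₗ f).restrict h₁) = LinearMap.det ((f ∘ₗ g).restrict h₂) := by
  let f' := f.restrict (p := range g) fun x _ => mem_range_self f x
  let g' := g.restrict (p := range f) fun y _ => mem_range_self g y
  have hf' : Function.Injective f' := (injective_restrict_iff _).2 hf
  have hg' : Function.Injective g' := (injective_restrict_iff _).2 hg
  have hrank : finrank K (range g) = finrank K (range f) :=
    (finrank_le_finrank_of_injective hf').antisymm (finrank_le_finrank_of_injective hg')
  exact det_comp_comm_of_finrank_eq hrank f' g'

end Field

end LinearMap

open LinearMap

section Laplacian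

variable {R : Type*} [Semiring R] {C : ℕ → Type*} [∀ j, AddCommMonoid (C j)]
  [∀ j, Module R (C j)] {d : ∀ j, C j →ₗ[R] C (j + 1)} {δ : ∀ j, C (j + 1) →ₗ[R] C j}
  {Δ : ∀ j, C j →ₗ[R] C j}

theorem laplacian_comp_codifferential (hδ : ∀ j, δ j ∘ₗ δ (j + 1) = 0)
    (hΔ0 : Δ 0 = δ 0 ∘ₗ d 0) (hΔsucc : ∀ j, Δ (j + 1) = δ (j + 1) ∘ₗ d (j + 1) + d j ∘ₗ δ j)
    (j : ℕ) : Δ j ∘ₗ δ j = δ j ∘ₗ d j ∘ₗ δ j := by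
  cases j with
  | zero => rw [hΔ0, comp_assoc]
  | succ k => rw [hΔsucc, add_comp, comp_assoc, comp_assoc, hδ, comp_zero, add_zero]

theorem laplacian_succ_comp_differential (hd : ∀ j, d (j + 1) ∘ₗ d j = 0)
    (hΔsucc : ∀ j, Δ (j + 1) = δ (j + 1) ∘ₗ d (j + 1) + d j ∘ₗ δ j) (j : ℕ) :
    Δ (j + 1) ∘ₗ d j = d j ∘ₗ δ j ∘ₗ d j := by
  rw [hΔsucc, add_comp, comp_assoc, hd, comp_zero, zero_add, comp_assoc]

end Laplacian

/-- Let `(C^•, d, δ)` be a finite bi-graded complex of finite-dimensional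
complex vector spaces whose combinatorial Laplacian `Δ j` is bijective for `j = 0, …, n`
(here `δ j : C (j+1) →ₗ C j` is the paper's `δ_{j+1}`). Then for every `j = 0, …, n`,
the composite `δ_{j+1} ∘ d_j` maps `im δ_{j+1} = range (δ j) ⊆ C^j` to itself, the composite
`d_j ∘ δ_{j+1}` maps `im d_j = range (d j) ⊆ C^{j+1}` to itself, and the determinants of the
two restricted endomorphisms coincide (the determinant of the endomorphism of the zero space
being `1`, which is Mathlib's convention for `LinearMap.det`). -/
theorem det_restricted_composites_eq_of_laplacian_bijective
    (n : ℕ) (C : ℕ → Type) [∀ j, AddCommGroup (C j)] [∀ j, Module ℂ (C j)]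
    [∀ j, FiniteDimensional ℂ (C j)]
    (hC : ∀ j, n < j → Subsingleton (C j))
    (d : ∀ j, C j →ₗ[ℂ] C (j + 1)) (δ : ∀ j, C (j + 1) →ₗ[ℂ] C j)
    (hd : ∀ j, (d (j + 1)).comp (d j) = 0)
    (hδ : ∀ j, (δ j).comp (δ (j + 1)) = 0)
    (Δ : ∀ j, C j →ₗ[ℂ] C j)
    (hΔ0 : Δ 0 = (δ 0).comp (d 0))
    (hΔsucc : ∀ j, Δ (j + 1) = (δ (j + 1)).comp (d (j + 1)) + (d j).comp (δ j))
    (hbij : ∀ j, j ≤ n → Function.Bijective ⇑(Δ j)) :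
    ∀ j, j ≤ n →
      (∀ x ∈ LinearMap.range (δ j), ((δ j).comp (d j)) x ∈ LinearMap.range (δ j)) ∧
      (∀ x ∈ LinearMap.range (d j), ((d j).comp (δ j)) x ∈ LinearMap.range (d j)) ∧
      ∀ (h1 : ∀ x ∈ LinearMap.range (δ j), ((δ j).comp (d j)) x ∈ LinearMap.range (δ j))
        (h2 : ∀ x ∈ LinearMap.range (d j), ((d j).comp (δ j)) x ∈ LinearMap.range (d j)),
        LinearMap.det (((δ j).comp (d j)).restrict h1) =
          LinearMap.det (((d j).comp (δ j)).restrict h2) := by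
  intro j hj
  refine ⟨fun x _ => mem_range_self _ _, fun x _ => mem_range_self _ _, fun h₁ h₂ => ?_⟩
  refine det_restrict_comp_range_eq (d j) (δ j) ?_ ?_ h₁ h₂
  · exact disjoint_range_ker_of_injective (hbij j hj).1
      (laplacian_comp_codifferential hδ hΔ0 hΔsucc j)
  · rcases le_or_gt (j + 1) n with hjn | hjn
    · exact disjoint_range_ker_of_injective (hbij (j + 1) hjn).1
        (laplacian_succ_comp_differential hd hΔsucc j)
    · have := hC (j + 1) hjn
      rw [Submodule.eq_bot_of_subsingleton (p := range (d j))]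
      exact disjoint_bot_left
end

section
/- Let (C^•, d, δ) be a finite bi-graded complex of finite-dimensional complex vector spaces whose combinatorial Laplacian Δ_j is bijective for every j = 0, …, n. Then for every j, det(Δ_j) = det(d_{j−1} ∘ δ_j |_{im d_{j−1}}) · det(δ_{j+1} ∘ d_j |_{im δ_{j+1}}), where both composites preserve the indicated subspaces and the determinant over the zero subspace is 1. -/
/-!
If `Δ = δ d + d δ` is bijective on `C^j`, then `C^j = im d_{j-1} ⊕ im δ_{j+1}`: a vector in both
ranges is killed by `Δ` (because `d d = 0` and `δ δ = 0`), and surjectivity of `Δ` writes every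
vector as `δ (d y) + d (δ y)`. On `im d_{j-1}` the Laplacian acts as `d δ`, on `im δ_{j+1}` as
`δ d`, and the determinant is multiplicative along an invariant direct sum decomposition.
-/

namespace LinearMap

theorem restrict_congr {R M : Type*} [Semiring R] [AddCommMonoid M] [Module R M]
    {p : Submodule R M} {f g : Module.End R M} (hf : ∀ x ∈ p, f x ∈ p)
    (hg : ∀ x ∈ p, g x ∈ p) (h : ∀ x ∈ p, f x = g x) : f.restrict hf = g.restrict hg :=
  ext fun x => Subtype.ext (h x x.2)

variable {K E : Type*} [Field K] [AddCommGroup E] [Module K E]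

theorem det_eq_det_restrict_mul_det_restrict [FiniteDimensional K E] {p q : Submodule K E}
    (hpq : IsCompl p q) (f : Module.End K E) (hp : ∀ x ∈ p, f x ∈ p) (hq : ∀ x ∈ q, f x ∈ q) :
    f.det = (f.restrict hp).det * (f.restrict hq).det := by
  let e := Submodule.prodEquivOfIsCompl p q hpq
  have hconj : (e.symm : E →ₗ[K] p × q) ∘ₗ f ∘ₗ (e.symm.symm : p × q →ₗ[K] E) =
      (f.restrict hp).prodMap (f.restrict hq) := by
    refine ext fun x => e.injective ?_
    simp only [comp_apply, LinearEquiv.coe_coe, LinearEquiv.symm_symm,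
      LinearEquiv.apply_symm_apply, Submodule.coe_prodEquivOfIsCompl', map_add, prodMap_apply,
      restrict_apply, e]
  rw [← det_prodMap, ← hconj, det_conj]

end LinearMap

section Laplacian

open LinearMap

variable {K A E B : Type*} [Field K] [AddCommGroup A] [Module K A] [AddCommGroup E] [Module K E]
  [AddCommGroup B] [Module K B] {d₀ : A →ₗ[K] E} {δ₀ : E →ₗ[K] A} {d₁ : E →ₗ[K] B}
  {δ₁ : B →ₗ[K] E}

theorem laplacian_apply_of_mem_range_left (hd : d₁ ∘ₗ d₀ = 0) {x : E} (hx : x ∈ range d₀) :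
    (δ₁ ∘ₗ d₁ + d₀ ∘ₗ δ₀) x = (d₀ ∘ₗ δ₀) x := by
  obtain ⟨y, rfl⟩ := hx
  simp [← comp_apply d₁ d₀, hd]

theorem laplacian_apply_of_mem_range_right (hδ : δ₀ ∘ₗ δ₁ = 0) {x : E} (hx : x ∈ range δ₁) :
    (δ₁ ∘ₗ d₁ + d₀ ∘ₗ δ₀) x = (δ₁ ∘ₗ d₁) x := by
  obtain ⟨y, rfl⟩ := hx
  simp [← comp_apply δ₀ δ₁, hδ]

theorem isCompl_range_of_bijective_laplacian (hd : d₁ ∘ₗ d₀ = 0) (hδ : δ₀ ∘ₗ δ₁ = 0)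
    (hL : Function.Bijective (δ₁ ∘ₗ d₁ + d₀ ∘ₗ δ₀)) : IsCompl (range d₀) (range δ₁) := by
  constructor
  · refine Submodule.disjoint_def.mpr fun x hx₀ hx₁ => hL.1 ?_
    obtain ⟨z, rfl⟩ := hx₁
    rw [map_zero, laplacian_apply_of_mem_range_left hd hx₀]
    simp [← comp_apply δ₀ δ₁, hδ]
  · refine codisjoint_iff.mpr (eq_top_iff.mpr fun x _ => ?_)
    obtain ⟨y, rfl⟩ := hL.2 x
    exact add_mem (Submodule.mem_sup_right (mem_range_self δ₁ (d₁ y)))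
      (Submodule.mem_sup_left (mem_range_self d₀ (δ₀ y)))

theorem det_laplacian_eq_det_restrict_mul_det_restrict [FiniteDimensional K E]
    (hd : d₁ ∘ₗ d₀ = 0) (hδ : δ₀ ∘ₗ δ₁ = 0) (hL : Function.Bijective (δ₁ ∘ₗ d₁ + d₀ ∘ₗ δ₀))
    (h₀ : ∀ x ∈ range d₀, (d₀ ∘ₗ δ₀) x ∈ range d₀) (h₁ : ∀ x ∈ range δ₁, (δ₁ ∘ₗ d₁) x ∈ range δ₁) :
    (δ₁ ∘ₗ d₁ + d₀ ∘ₗ δ₀).det = ((d₀ ∘ₗ δ₀).restrict h₀).det * ((δ₁ ∘ₗ d₁).restrict h₁).det := by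
  have hL₀ : ∀ x ∈ range d₀, (δ₁ ∘ₗ d₁ + d₀ ∘ₗ δ₀) x ∈ range d₀ := fun x hx => by
    rw [laplacian_apply_of_mem_range_left hd hx]
    exact h₀ x hx
  have hL₁ : ∀ x ∈ range δ₁, (δ₁ ∘ₗ d₁ + d₀ ∘ₗ δ₀) x ∈ range δ₁ := fun x hx => by
    rw [laplacian_apply_of_mem_range_right hδ hx]
    exact h₁ x hx
  rw [det_eq_det_restrict_mul_det_restrict (isCompl_range_of_bijective_laplacian hd hδ hL) _
      hL₀ hL₁,
    restrict_congr hL₀ h₀ fun x hx => laplacian_apply_of_mem_range_left hd hx,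
    restrict_congr hL₁ h₁ fun x hx => laplacian_apply_of_mem_range_right hδ hx]

end Laplacian

open LinearMap in
theorem det_laplacian_factorization_of_laplacian_bijective_general
    (n : ℕ) (C : ℕ → Type) [∀ j, AddCommGroup (C j)] [∀ j, Module ℂ (C j)]
    [∀ j, FiniteDimensional ℂ (C j)]
    (d : ∀ j, C j →ₗ[ℂ] C (j + 1)) (δ : ∀ j, C (j + 1) →ₗ[ℂ] C j)
    (hd : ∀ j, (d (j + 1)).comp (d j) = 0)
    (hδ : ∀ j, (δ j).comp (δ (j + 1)) = 0)
    (Δ : ∀ j, C j →ₗ[ℂ] C j)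
    (hΔ0 : Δ 0 = (δ 0).comp (d 0))
    (hΔsucc : ∀ j, Δ (j + 1) = (δ (j + 1)).comp (d (j + 1)) + (d j).comp (δ j))
    (hbij : ∀ j, j ≤ n → Function.Bijective ⇑(Δ j)) :
    (∀ x ∈ LinearMap.range (δ 0), ((δ 0).comp (d 0)) x ∈ LinearMap.range (δ 0)) ∧
    (∀ (h : ∀ x ∈ LinearMap.range (δ 0), ((δ 0).comp (d 0)) x ∈ LinearMap.range (δ 0)),
      LinearMap.det (Δ 0) = 1 * LinearMap.det (((δ 0).comp (d 0)).restrict h)) ∧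
    ∀ j, j + 1 ≤ n →
      (∀ x ∈ LinearMap.range (d j), ((d j).comp (δ j)) x ∈ LinearMap.range (d j)) ∧
      (∀ x ∈ LinearMap.range (δ (j + 1)),
        ((δ (j + 1)).comp (d (j + 1))) x ∈ LinearMap.range (δ (j + 1))) ∧
      ∀ (h1 : ∀ x ∈ LinearMap.range (d j), ((d j).comp (δ j)) x ∈ LinearMap.range (d j))
        (h2 : ∀ x ∈ LinearMap.range (δ (j + 1)),
          ((δ (j + 1)).comp (d (j + 1))) x ∈ LinearMap.range (δ (j + 1))),
        LinearMap.det (Δ (j + 1)) =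
          LinearMap.det (((d j).comp (δ j)).restrict h1) *
            LinearMap.det (((δ (j + 1)).comp (d (j + 1))).restrict h2) := by
  refine ⟨fun x _ => mem_range_self _ _, fun h => ?_, fun j hj =>
    ⟨fun x _ => mem_range_self _ _, fun x _ => mem_range_self _ _, fun h₁ h₂ => ?_⟩⟩
  · -- degree `0` is the general case with `d_{-1} = 0` and `δ_0 = 0`
    let z : C 0 →ₗ[ℂ] C 0 := 0
    have hL : Δ 0 = δ 0 ∘ₗ d 0 + z ∘ₗ z := by simp [z, hΔ0]
    have : Subsingleton (range (z ∘ₗ z)) := by simp only [z, comp_zero, range_zero]; infer_instance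
    rw [hL, det_laplacian_eq_det_restrict_mul_det_restrict (by simp [z]) (by simp [z])
      (hL ▸ hbij 0 n.zero_le) (fun x _ => mem_range_self _ _) h, det_eq_one_of_subsingleton]
  · rw [hΔsucc]
    exact det_laplacian_eq_det_restrict_mul_det_restrict (hd j) (hδ j)
      (hΔsucc j ▸ hbij (j + 1) hj) h₁ h₂

/-- Let `(C^•, d, δ)` be a finite bi-graded complex of finite-dimensional
complex vector spaces whose combinatorial Laplacian `Δ j` is bijective for `j = 0, …, n`
(here `δ j : C (j+1) →ₗ C j` is the paper's `δ_{j+1}`). Then for every `j = 0, …, n`,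
`det (Δ j) = det (d_{j-1} ∘ δ_j |_{im d_{j-1}}) · det (δ_{j+1} ∘ d_j |_{im δ_{j+1}})`,
where both composites preserve the indicated subspaces; at degree `0` the subspace
`im d_{-1}` is the zero space and the corresponding determinant is `1`. -/
theorem det_laplacian_factorization_of_laplacian_bijective
    (n : ℕ) (C : ℕ → Type) [∀ j, AddCommGroup (C j)] [∀ j, Module ℂ (C j)]
    [∀ j, FiniteDimensional ℂ (C j)]
    (hC : ∀ j, n < j → Subsingleton (C j))
    (d : ∀ j, C j →ₗ[ℂ] C (j + 1)) (δ : ∀ j, C (j + 1) →ₗ[ℂ] C j)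
    (hd : ∀ j, (d (j + 1)).comp (d j) = 0)
    (hδ : ∀ j, (δ j).comp (δ (j + 1)) = 0)
    (Δ : ∀ j, C j →ₗ[ℂ] C j)
    (hΔ0 : Δ 0 = (δ 0).comp (d 0))
    (hΔsucc : ∀ j, Δ (j + 1) = (δ (j + 1)).comp (d (j + 1)) + (d j).comp (δ j))
    (hbij : ∀ j, j ≤ n → Function.Bijective ⇑(Δ j)) :
    (∀ x ∈ LinearMap.range (δ 0), ((δ 0).comp (d 0)) x ∈ LinearMap.range (δ 0)) ∧
    (∀ (h : ∀ x ∈ LinearMap.range (δ 0), ((δ 0).comp (d 0)) x ∈ LinearMap.range (δ 0)),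
      LinearMap.det (Δ 0) = 1 * LinearMap.det (((δ 0).comp (d 0)).restrict h)) ∧
    ∀ j, j + 1 ≤ n →
      (∀ x ∈ LinearMap.range (d j), ((d j).comp (δ j)) x ∈ LinearMap.range (d j)) ∧
      (∀ x ∈ LinearMap.range (δ (j + 1)),
        ((δ (j + 1)).comp (d (j + 1))) x ∈ LinearMap.range (δ (j + 1))) ∧
      ∀ (h1 : ∀ x ∈ LinearMap.range (d j), ((d j).comp (δ j)) x ∈ LinearMap.range (d j))
        (h2 : ∀ x ∈ LinearMap.range (δ (j + 1)),
          ((δ (j + 1)).comp (d (j + 1))) x ∈ LinearMap.range (δ (j + 1))),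
        LinearMap.det (Δ (j + 1)) =
          LinearMap.det (((d j).comp (δ j)).restrict h1) *
            LinearMap.det (((δ (j + 1)).comp (d (j + 1))).restrict h2) :=
  det_laplacian_factorization_of_laplacian_bijective_general n C d δ hd hδ Δ hΔ0 hΔsucc hbij
end

section
/- Let (C^•, d, δ) be a finite bi-graded complex of finite-dimensional complex vector spaces whose combinatorial Laplacian Δ_j is bijective for every j = 0, …, n. Then the alternating product of the determinants of the Laplacians is trivial: ∏_{j=0}^{n} det(Δ_j)^{(−1)^j} = 1. -/
/-!
Write `Δ_j = D_j + U_j` with down part `D_j = δ_j d_j` and up part `U_j = d_{j-1} δ_{j-1}`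
(`U_0 = 0`). Since `D_j U_j = U_j D_j = 0` and `Δ_j` is invertible, `C^j = im D_j ⊕ im U_j`, and
`Δ_j` acts as `D_j` on the first summand and as `U_j` on the second. The map `d_j` carries
`im D_j` isomorphically onto `im U_{j+1}` and intertwines `δ_j d_j` with `d_j δ_j`, so
`det (D_j on im D_j) = b_{j+1}`, where `b_j := det (U_j on im U_j)`. Hence
`det Δ_j = b_j b_{j+1}` with `b_0 = b_{n+1} = 1`, and the alternating product telescopes.
-/

open LinearMap Function

theorem LinearMap.det_comp_comm_of_bijective {R M N : Type*} [CommRing R] [AddCommGroup M]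
    [Module R M] [AddCommGroup N] [Module R N] (f : M →ₗ[R] N) (g : N →ₗ[R] M)
    (hgf : Bijective (g ∘ₗ f)) (hfg : Bijective (f ∘ₗ g)) :
    LinearMap.det (g ∘ₗ f) = LinearMap.det (f ∘ₗ g) := by
  let e := LinearEquiv.ofBijective f ⟨Injective.of_comp (f := g) hgf.1,
    Surjective.of_comp (g := g) hfg.2⟩
  have hconj : f ∘ₗ g = (e : M →ₗ[R] N) ∘ₗ (g ∘ₗ f) ∘ₗ (e.symm : N →ₗ[R] M) := by
    ext y
    change f (g y) = f (g (f (e.symm y)))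
    rw [show f (e.symm y) = y from e.apply_symm_apply y]
  rw [hconj, det_conj]

theorem LinearMap.det_eq_det_restrict_mul_det_restrict_s6 {K V : Type*} [Field K] [AddCommGroup V]
    [Module K V] [FiniteDimensional K V] {f : Module.End K V} {p q : Submodule K V}
    (hpq : IsCompl p q) (hp : ∀ x ∈ p, f x ∈ p) (hq : ∀ x ∈ q, f x ∈ q) :
    LinearMap.det f = LinearMap.det (f.restrict hp) * LinearMap.det (f.restrict hq) := by
  let e := p.prodEquivOfIsCompl q hpq
  have hconj : f ∘ₗ e = e ∘ₗ (f.restrict hp).prodMap (f.restrict hq) := by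
    ext x <;> simp [e]
  rw [← det_prodMap, ← det_conj _ e, ← LinearMap.comp_assoc, ← hconj, LinearMap.comp_assoc]
  simp only [LinearEquiv.comp_coe, LinearEquiv.symm_trans_self, LinearEquiv.refl_toLinearMap,
    comp_id]

def Module.End.restrictRange {R M : Type*} [Semiring R] [AddCommMonoid M] [Module R M]
    (f : Module.End R M) : Module.End R (range f) :=
  f.restrict fun x _ ↦ mem_range_self f x

section

variable {K V : Type*} [Field K] [AddCommGroup V] [Module K V] {D U : Module.End K V}

theorem isCompl_range_of_comp_eq_zero (hDU : D ∘ₗ U = 0) (hUD : U ∘ₗ D = 0)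
    (hbij : Bijective (D + U)) : IsCompl (range D) (range U) := by
  constructor
  · rw [disjoint_iff_inf_le]
    rintro x ⟨⟨a, rfl⟩, ⟨b, hb⟩⟩
    have hDx : D (D a) = 0 := by rw [← hb]; simpa using LinearMap.congr_fun hDU b
    have hUx : U (D a) = 0 := by simpa using LinearMap.congr_fun hUD a
    exact hbij.1 (by simp [hDx, hUx])
  · rw [codisjoint_iff_le_sup]
    intro x _
    obtain ⟨y, rfl⟩ := hbij.2 x
    exact Submodule.add_mem_sup (mem_range_self D y) (mem_range_self U y)

theorem bijective_restrictRange_of_comp_eq_zero [FiniteDimensional K V] (hUD : U ∘ₗ D = 0)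
    (hbij : Bijective (D + U)) : Bijective D.restrictRange := by
  have hinj : Injective D.restrictRange := by
    rintro ⟨_, a, rfl⟩ ⟨_, b, rfl⟩ h
    have hUa : U (D a) = 0 := by simpa using LinearMap.congr_fun hUD a
    have hUb : U (D b) = 0 := by simpa using LinearMap.congr_fun hUD b
    have hDD : D (D a) = D (D b) := congr(Subtype.val $h)
    exact Subtype.ext (hbij.1 (by simp [hUa, hUb, hDD]))
  exact ⟨hinj, injective_iff_surjective.mp hinj⟩

theorem det_add_of_comp_eq_zero [FiniteDimensional K V] (hDU : D ∘ₗ U = 0) (hUD : U ∘ₗ D = 0)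
    (hbij : Bijective (D + U)) :
    LinearMap.det (D + U) = LinearMap.det D.restrictRange * LinearMap.det U.restrictRange := by
  have hUD' (a : V) : U (D a) = 0 := by simpa using LinearMap.congr_fun hUD a
  have hDU' (a : V) : D (U a) = 0 := by simpa using LinearMap.congr_fun hDU a
  have hD : ∀ x ∈ range D, (D + U) x ∈ range D := by
    rintro _ ⟨a, rfl⟩
    exact ⟨D a, by simp [hUD']⟩
  have hU : ∀ x ∈ range U, (D + U) x ∈ range U := by
    rintro _ ⟨a, rfl⟩
    exact ⟨U a, by simp [hDU']⟩
  rw [det_eq_det_restrict_mul_det_restrict_s6 (isCompl_range_of_comp_eq_zero hDU hUD hbij) hD hU]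
  congr 2 <;> ext ⟨_, a, rfl⟩ <;> simp [Module.End.restrictRange, hUD', hDU']

end

theorem Finset.prod_range_mul_succ_zpow_neg_one_pow {G₀ : Type*} [CommGroupWithZero G₀]
    (c : ℕ → G₀) (n : ℕ) (hc : ∀ j < n, c (j + 1) ≠ 0) :
    ∏ j ∈ Finset.range (n + 1), (c j * c (j + 1)) ^ ((-1 : ℤ) ^ j)
      = c 0 * c (n + 1) ^ ((-1 : ℤ) ^ n) := by
  induction n with
  | zero => simp
  | succ n ih =>
    have hcn : c (n + 1) ^ ((-1 : ℤ) ^ n) ≠ 0 := zpow_ne_zero _ (hc n n.lt_succ_self)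
    rw [Finset.prod_range_succ, ih fun j hj ↦ hc j (hj.trans n.lt_succ_self), pow_succ,
      mul_neg_one, zpow_neg, zpow_neg, mul_zpow, mul_inv, mul_assoc, mul_inv_cancel_left₀ hcn]

section BigradedComplex

variable {K : Type*} [Field K] {C : ℕ → Type*} [∀ j, AddCommGroup (C j)] [∀ j, Module K (C j)]

def downLaplacian (d : ∀ j, C j →ₗ[K] C (j + 1)) (δ : ∀ j, C (j + 1) →ₗ[K] C j) (j : ℕ) :
    Module.End K (C j) :=
  δ j ∘ₗ d j

def upLaplacian (d : ∀ j, C j →ₗ[K] C (j + 1)) (δ : ∀ j, C (j + 1) →ₗ[K] C j) :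
    ∀ j, Module.End K (C j)
  | 0 => 0
  | j + 1 => d j ∘ₗ δ j

variable {d : ∀ j, C j →ₗ[K] C (j + 1)} {δ : ∀ j, C (j + 1) →ₗ[K] C j}

theorem downLaplacian_comp_upLaplacian (hd : ∀ j, d (j + 1) ∘ₗ d j = 0) (j : ℕ) :
    downLaplacian d δ j ∘ₗ upLaplacian d δ j = 0 := by
  cases j with
  | zero => exact comp_zero _
  | succ j =>
    rw [downLaplacian, upLaplacian, LinearMap.comp_assoc, ← LinearMap.comp_assoc (δ j), hd,
      zero_comp, comp_zero]

theorem upLaplacian_comp_downLaplacian (hδ : ∀ j, δ j ∘ₗ δ (j + 1) = 0) (j : ℕ) :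
    upLaplacian d δ j ∘ₗ downLaplacian d δ j = 0 := by
  cases j with
  | zero => exact zero_comp _
  | succ j =>
    rw [downLaplacian, upLaplacian, LinearMap.comp_assoc, ← LinearMap.comp_assoc (d (j + 1)), hδ,
      zero_comp, comp_zero]

variable [∀ j, FiniteDimensional K (C j)]

theorem det_restrictRange_downLaplacian (hd : ∀ j, d (j + 1) ∘ₗ d j = 0)
    (hδ : ∀ j, δ j ∘ₗ δ (j + 1) = 0) (j : ℕ)
    (hj : Bijective (downLaplacian d δ j + upLaplacian d δ j))
    (hj' : Bijective (downLaplacian d δ (j + 1) + upLaplacian d δ (j + 1))) :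
    LinearMap.det (downLaplacian d δ j).restrictRange
      = LinearMap.det (upLaplacian d δ (j + 1)).restrictRange := by
  have hd_range : ∀ x ∈ range (downLaplacian d δ j), d j x ∈ range (upLaplacian d δ (j + 1)) := by
    rintro _ ⟨a, rfl⟩
    exact ⟨d j a, rfl⟩
  have hδ_range : ∀ y ∈ range (upLaplacian d δ (j + 1)), δ j y ∈ range (downLaplacian d δ j) := by
    rintro _ ⟨a, rfl⟩
    exact ⟨δ j a, rfl⟩
  exact det_comp_comm_of_bijective ((d j).restrict hd_range) ((δ j).restrict hδ_range)
    (bijective_restrictRange_of_comp_eq_zero (upLaplacian_comp_downLaplacian hδ j) hj)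
    (bijective_restrictRange_of_comp_eq_zero (downLaplacian_comp_upLaplacian hd (j + 1))
      (by rwa [add_comm (downLaplacian d δ (j + 1))] at hj'))

theorem det_laplacian_eq_mul (hd : ∀ j, d (j + 1) ∘ₗ d j = 0)
    (hδ : ∀ j, δ j ∘ₗ δ (j + 1) = 0) (j : ℕ)
    (hj : Bijective (downLaplacian d δ j + upLaplacian d δ j))
    (hj' : Bijective (downLaplacian d δ (j + 1) + upLaplacian d δ (j + 1))) :
    LinearMap.det (downLaplacian d δ j + upLaplacian d δ j)
      = LinearMap.det (upLaplacian d δ j).restrictRange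
        * LinearMap.det (upLaplacian d δ (j + 1)).restrictRange := by
  rw [det_add_of_comp_eq_zero (downLaplacian_comp_upLaplacian hd j)
    (upLaplacian_comp_downLaplacian hδ j) hj, det_restrictRange_downLaplacian hd hδ j hj hj',
    mul_comm]

end BigradedComplex

/-- Let `(C^•, d, δ)` be a finite bi-graded complex of finite-dimensional
complex vector spaces whose combinatorial Laplacian `Δ j` is bijective for `j = 0, …, n`
(here `δ j : C (j+1) →ₗ C j` is the paper's `δ_{j+1}`). Then the alternating product of the
determinants of the Laplacians is trivial: `∏_{j=0}^{n} det (Δ j) ^ ((-1)^j) = 1`. -/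
theorem alternating_product_det_laplacian_eq_one
    (n : ℕ) (C : ℕ → Type) [∀ j, AddCommGroup (C j)] [∀ j, Module ℂ (C j)]
    [∀ j, FiniteDimensional ℂ (C j)]
    (hC : ∀ j, n < j → Subsingleton (C j))
    (d : ∀ j, C j →ₗ[ℂ] C (j + 1)) (δ : ∀ j, C (j + 1) →ₗ[ℂ] C j)
    (hd : ∀ j, (d (j + 1)).comp (d j) = 0)
    (hδ : ∀ j, (δ j).comp (δ (j + 1)) = 0)
    (Δ : ∀ j, C j →ₗ[ℂ] C j)
    (hΔ0 : Δ 0 = (δ 0).comp (d 0))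
    (hΔsucc : ∀ j, Δ (j + 1) = (δ (j + 1)).comp (d (j + 1)) + (d j).comp (δ j))
    (hbij : ∀ j, j ≤ n → Function.Bijective ⇑(Δ j)) :
    ∏ j ∈ Finset.range (n + 1), LinearMap.det (Δ j) ^ ((-1 : ℤ) ^ j) = 1 := by
  have hΔ : ∀ j, Δ j = downLaplacian d δ j + upLaplacian d δ j := by
    rintro (_ | j)
    · rw [hΔ0, downLaplacian, upLaplacian, add_zero]
    · exact hΔsucc j
  have hbij_all (j : ℕ) : Bijective (Δ j) := by
    rcases le_or_gt j n with hj | hj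
    · exact hbij j hj
    · have := hC j hj
      exact bijective_of_subsingleton _
  let b (j : ℕ) : ℂ := LinearMap.det (upLaplacian d δ j).restrictRange
  have hdet (j : ℕ) : LinearMap.det (Δ j) = b j * b (j + 1) := by
    simp only [hΔ] at hbij_all ⊢
    exact det_laplacian_eq_mul hd hδ j (hbij_all j) (hbij_all (j + 1))
  have hb0 : b 0 = 1 := by
    have : Subsingleton (range (upLaplacian d δ 0)) := ⟨by rintro ⟨_, x, rfl⟩ ⟨_, y, rfl⟩; rfl⟩
    exact det_eq_one_of_subsingleton _
  have hbn : b (n + 1) = 1 := by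
    have := hC (n + 1) n.lt_succ_self
    exact det_eq_one_of_subsingleton _
  have hb_ne (j : ℕ) : b (j + 1) ≠ 0 := by
    have hΔ_ne : LinearMap.det (Δ j) ≠ 0 :=
      (LinearEquiv.isUnit_det' (LinearEquiv.ofBijective _ (hbij_all j))).ne_zero
    exact right_ne_zero_of_mul (hdet j ▸ hΔ_ne)
  rw [Finset.prod_congr rfl fun j _ ↦ by rw [hdet j],
    Finset.prod_range_mul_succ_zpow_neg_one_pow b n fun j _ ↦ hb_ne j, hb0, hbn, one_zpow, one_mul]
end

section
/- Let (C^•, d, δ) be a finite bi-graded complex of finite-dimensional complex vector spaces, and let P_j : C^j → C^j be linear projections (P_j ∘ P_j = P_j) commuting with both differentials, i.e. P_{j+1} ∘ d_j = d_j ∘ P_j and P_{j−1} ∘ δ_j = δ_j ∘ P_j for all j. If Δ_j restricted to ker P_j is bijective for every j = 0, …, n, then the subcomplex (ker P^•, δ) is acyclic (its homology vanishes in every degree), and the inclusions im P_j ↪ C^j induce isomorphisms H_j(im P^•, δ) ≅ H_j(C^•, δ) for every j. -/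
/-!
The Laplacian commutes with `δ`. Given `x ∈ ker δ ∩ ker P`, write `x = Δ z` with `z ∈ ker P`;
then `δ z ∈ ker P` and `Δ (δ z) = δ x = 0`, so `δ z = 0` by injectivity and `x = δ (d z)` with
`d z ∈ ker P`. For the homology, split `C^j = im P ⊕ ker P`: a cycle differs from the cycle
`P x ∈ im P` by a cycle in `ker P`, which is a boundary, and a boundary `δ y` lying in `im P`
equals `δ (P y)`.
-/

open LinearMap Submodule

section CommutingMaps

variable {R M N : Type*} [Ring R] [AddCommGroup M] [Module R M] [AddCommGroup N] [Module R N]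
  {f : M →ₗ[R] N} {p : M →ₗ[R] M} {q : N →ₗ[R] N}

theorem LinearMap.map_ker_le_ker_of_comp_eq (h : q ∘ₗ f = f ∘ₗ p) : (ker p).map f ≤ ker q := by
  rw [map_le_iff_le_comap, ← ker_comp, h]
  exact ker_le_ker_comp p f

theorem LinearMap.map_range_le_range_of_comp_eq (h : q ∘ₗ f = f ∘ₗ p) :
    (range p).map f ≤ range q := by
  rw [← range_comp, ← h]
  exact range_comp_le_range f q

theorem LinearMap.range_inf_range_eq_map_range (hq : IsIdempotentElem q) (h : q ∘ₗ f = f ∘ₗ p) :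
    range q ⊓ range f = (range p).map f := by
  refine le_antisymm ?_ (le_inf (map_range_le_range_of_comp_eq h) map_le_range)
  rintro _ ⟨hxq, y, rfl⟩
  refine ⟨p y, mem_range_self p y, ?_⟩
  rw [← LinearMap.comp_apply, ← h, LinearMap.comp_apply, hq.mem_range_iff.1 hxq]

end CommutingMaps

theorem Submodule.exists_quotientEquiv_of_comap_eq {R M N : Type*} [Ring R] [AddCommGroup M]
    [Module R M] [AddCommGroup N] [Module R N] (f : M →ₗ[R] N) {p : Submodule R M}
    {q : Submodule R N} (hpq : q.comap f = p) (hf : range f ⊔ q = ⊤) :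
    ∃ e : (M ⧸ p) ≃ₗ[R] N ⧸ q, ∀ x, e (Quotient.mk x) = Quotient.mk (f x) := by
  have hsurj : Function.Surjective (q.mkQ ∘ₗ f) := by
    rw [← range_eq_top, range_comp, map_mkQ_eq_top, sup_comm, hf]
  have hker : ker (q.mkQ ∘ₗ f) = p := by rw [ker_comp, ker_mkQ, hpq]
  exact ⟨(quotEquivOfEq _ _ hker.symm).trans ((q.mkQ ∘ₗ f).quotKerEquivOfSurjective hsurj),
    fun _ => rfl⟩

namespace BigradedComplex

variable {R : Type*} [Ring R] {C : ℕ → Type*} [∀ j, AddCommGroup (C j)] [∀ j, Module R (C j)]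
  (d : ∀ j, C j →ₗ[R] C (j + 1)) (δ : ∀ j, C (j + 1) →ₗ[R] C j)

/-- `δ j : C (j + 1) → C j` is the paper's `δ_{j+1}`. -/
def laplacian : ∀ j, C j →ₗ[R] C j
  | 0 => δ 0 ∘ₗ d 0
  | j + 1 => δ (j + 1) ∘ₗ d (j + 1) + d j ∘ₗ δ j

variable {d δ}

theorem laplacian_comp_delta (hδ : ∀ j, δ j ∘ₗ δ (j + 1) = 0) (j : ℕ) :
    laplacian d δ j ∘ₗ δ j = δ j ∘ₗ laplacian d δ (j + 1) := by
  cases j with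
  | zero => simp only [laplacian, comp_add, ← comp_assoc, hδ, zero_comp, zero_add]
  | succ j =>
    simp only [laplacian, comp_add, add_comp, ← comp_assoc, hδ, zero_comp, zero_add]
    rw [comp_assoc (δ (j + 1)) (δ j), hδ, comp_zero, add_zero]

variable {P : ∀ j, C j →ₗ[R] C j}

theorem delta_eq_zero_of_delta_laplacian_eq_zero (hδ : ∀ j, δ j ∘ₗ δ (j + 1) = 0)
    (hPδ : ∀ j, P j ∘ₗ δ j = δ j ∘ₗ P (j + 1)) {j : ℕ}
    (hinj : Set.InjOn (laplacian d δ j) (ker (P j))) {z : C (j + 1)} (hz : z ∈ ker (P (j + 1)))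
    (hΔz : δ j (laplacian d δ (j + 1) z) = 0) : δ j z = 0 :=
  hinj (map_ker_le_ker_of_comp_eq (hPδ j) (mem_map_of_mem hz)) (zero_mem _) <| by
    rw [← comp_apply, laplacian_comp_delta hδ, comp_apply, hΔz, map_zero]

theorem ker_eq_map_ker_zero (hPd : ∀ j, P (j + 1) ∘ₗ d j = d j ∘ₗ P j)
    (hPδ : ∀ j, P j ∘ₗ δ j = δ j ∘ₗ P (j + 1))
    (hsurj : Set.SurjOn (laplacian d δ 0) (ker (P 0)) (ker (P 0))) :
    ker (P 0) = (ker (P 1)).map (δ 0) := by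
  refine le_antisymm (fun x hx => ?_) (map_ker_le_ker_of_comp_eq (hPδ 0))
  obtain ⟨z, hz, rfl⟩ := hsurj hx
  exact mem_map_of_mem (map_ker_le_ker_of_comp_eq (hPd 0) (mem_map_of_mem hz))

theorem ker_delta_inf_ker_eq_map_ker (hδ : ∀ j, δ j ∘ₗ δ (j + 1) = 0)
    (hPd : ∀ j, P (j + 1) ∘ₗ d j = d j ∘ₗ P j) (hPδ : ∀ j, P j ∘ₗ δ j = δ j ∘ₗ P (j + 1))
    {j : ℕ} (hinj : Set.InjOn (laplacian d δ j) (ker (P j)))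
    (hsurj : Set.SurjOn (laplacian d δ (j + 1)) (ker (P (j + 1))) (ker (P (j + 1)))) :
    ker (δ j) ⊓ ker (P (j + 1)) = (ker (P (j + 2))).map (δ (j + 1)) := by
  refine le_antisymm ?_ (le_inf (map_le_range.trans (range_le_ker_iff.2 (hδ j)))
    (map_ker_le_ker_of_comp_eq (hPδ (j + 1))))
  rintro x ⟨hxδ, hxP⟩
  obtain ⟨z, hz, rfl⟩ := hsurj hxP
  have hδz : δ j z = 0 := delta_eq_zero_of_delta_laplacian_eq_zero hδ hPδ hinj hz hxδ
  have hΔz : laplacian d δ (j + 1) z = δ (j + 1) (d (j + 1) z) := by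
    simp only [laplacian, LinearMap.add_apply, comp_apply, hδz, map_zero, add_zero]
  rw [hΔz]
  exact mem_map_of_mem (map_ker_le_ker_of_comp_eq (hPd (j + 1)) (mem_map_of_mem hz))

theorem comap_subtype_range_delta_eq {j : ℕ} (hP : IsIdempotentElem (P j))
    (hPδ : ∀ j, P j ∘ₗ δ j = δ j ∘ₗ P (j + 1)) {S : Submodule R (C j)} (hS : S ≤ range (P j)) :
    (range (δ j)).comap S.subtype = ((range (P (j + 1))).map (δ j)).comap S.subtype := by
  rw [← range_inf_range_eq_map_range hP (hPδ j), comap_inf, comap_subtype_eq_top.2 hS, top_inf_eq]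

theorem exists_homologyEquiv_zero (hP : IsIdempotentElem (P 0))
    (hPδ : ∀ j, P j ∘ₗ δ j = δ j ∘ₗ P (j + 1)) (hker : ker (P 0) ≤ range (δ 0)) :
    ∃ e : (range (P 0) ⧸ ((range (P 1)).map (δ 0)).comap (range (P 0)).subtype) ≃ₗ[R]
        C 0 ⧸ range (δ 0),
      ∀ x, e (Submodule.Quotient.mk x) = Submodule.Quotient.mk (x : C 0) := by
  refine exists_quotientEquiv_of_comap_eq _ (comap_subtype_range_delta_eq hP hPδ le_rfl) ?_
  rw [range_subtype, eq_top_iff, ← hP.isCompl.sup_eq_top]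
  exact sup_le_sup_left hker _

theorem exists_homologyEquiv_succ {j : ℕ} (hP : IsIdempotentElem (P (j + 1)))
    (hPδ : ∀ j, P j ∘ₗ δ j = δ j ∘ₗ P (j + 1))
    (hker : ker (δ j) ⊓ ker (P (j + 1)) ≤ range (δ (j + 1))) :
    ∃ e : (↥(ker (δ j) ⊓ range (P (j + 1))) ⧸
        ((range (P (j + 2))).map (δ (j + 1))).comap (ker (δ j) ⊓ range (P (j + 1))).subtype)
        ≃ₗ[R] ↥(ker (δ j)) ⧸ (range (δ (j + 1))).comap (ker (δ j)).subtype,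
      ∀ x, e (Submodule.Quotient.mk x) = Submodule.Quotient.mk (inclusion inf_le_left x) := by
  refine exists_quotientEquiv_of_comap_eq _ ?_ (eq_top_iff.2 fun m _ => mem_sup.2 ?_)
  · rw [← comap_comp, subtype_comp_inclusion]
    exact comap_subtype_range_delta_eq hP hPδ inf_le_right
  have hPm : P (j + 1) m ∈ ker (δ j) ⊓ range (P (j + 1)) := mem_inf.2
    ⟨by rw [mem_ker, ← comp_apply, ← hPδ, comp_apply, mem_ker.1 m.2, map_zero],
      mem_range_self _ _⟩
  refine ⟨inclusion inf_le_left ⟨_, hPm⟩, mem_range_self _ _, m - inclusion inf_le_left ⟨_, hPm⟩,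
    hker (mem_inf.2 ⟨sub_mem m.2 (mem_inf.1 hPm).1, ?_⟩), add_sub_cancel _ _⟩
  rw [mem_ker, subtype_apply, Submodule.coe_sub, coe_inclusion, map_sub]
  exact sub_eq_zero.2 (LinearMap.congr_fun hP.eq m).symm

end BigradedComplex

open BigradedComplex

theorem subcomplex_ker_delta_acyclic_and_image_computes_homology_general
    (n : ℕ) (C : ℕ → Type) [∀ j, AddCommGroup (C j)] [∀ j, Module ℂ (C j)]
    (d : ∀ j, C j →ₗ[ℂ] C (j + 1)) (δ : ∀ j, C (j + 1) →ₗ[ℂ] C j)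
    (hδ : ∀ j, (δ j).comp (δ (j + 1)) = 0)
    (Δ : ∀ j, C j →ₗ[ℂ] C j)
    (hΔ0 : Δ 0 = (δ 0).comp (d 0))
    (hΔsucc : ∀ j, Δ (j + 1) = (δ (j + 1)).comp (d (j + 1)) + (d j).comp (δ j))
    (P : ∀ j, C j →ₗ[ℂ] C j)
    (hP : ∀ j, (P j).comp (P j) = P j)
    (hPd : ∀ j, (P (j + 1)).comp (d j) = (d j).comp (P j))
    (hPδ : ∀ j, (P j).comp (δ j) = (δ j).comp (P (j + 1)))
    (hbijker : ∀ j, j ≤ n →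
      Set.BijOn ⇑(Δ j) (LinearMap.ker (P j) : Set (C j)) (LinearMap.ker (P j) : Set (C j))) :
    (LinearMap.ker (P 0) = Submodule.map (δ 0) (LinearMap.ker (P 1))) ∧
    (∀ j, j + 1 ≤ n →
      LinearMap.ker (δ j) ⊓ LinearMap.ker (P (j + 1)) =
        Submodule.map (δ (j + 1)) (LinearMap.ker (P (j + 2)))) ∧
    (∃ e : (↥(LinearMap.range (P 0)) ⧸
              Submodule.comap (LinearMap.range (P 0)).subtype
                (Submodule.map (δ 0) (LinearMap.range (P 1))))
            ≃ₗ[ℂ] (C 0 ⧸ LinearMap.range (δ 0)),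
      ∀ x : ↥(LinearMap.range (P 0)),
        e (Submodule.Quotient.mk x) = Submodule.Quotient.mk (x : C 0)) ∧
    (∀ j, j + 1 ≤ n →
      ∃ e : (↥(LinearMap.ker (δ j) ⊓ LinearMap.range (P (j + 1))) ⧸
              Submodule.comap
                (LinearMap.ker (δ j) ⊓ LinearMap.range (P (j + 1))).subtype
                (Submodule.map (δ (j + 1)) (LinearMap.range (P (j + 2)))))
            ≃ₗ[ℂ] (↥(LinearMap.ker (δ j)) ⧸
              Submodule.comap (LinearMap.ker (δ j)).subtype (LinearMap.range (δ (j + 1)))),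
        ∀ (x : ↥(LinearMap.ker (δ j) ⊓ LinearMap.range (P (j + 1))))
          (hx : (x : C (j + 1)) ∈ LinearMap.ker (δ j)),
          e (Submodule.Quotient.mk x) =
            Submodule.Quotient.mk (⟨(x : C (j + 1)), hx⟩ : ↥(LinearMap.ker (δ j)))) := by
  obtain rfl : Δ = laplacian d δ := funext fun
    | 0 => hΔ0
    | j + 1 => hΔsucc j
  have hacyc0 := ker_eq_map_ker_zero hPd hPδ (hbijker 0 n.zero_le).surjOn
  have hacyc : ∀ j, j + 1 ≤ n → ker (δ j) ⊓ ker (P (j + 1)) = (ker (P (j + 2))).map (δ (j + 1)) :=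
    fun j hj => ker_delta_inf_ker_eq_map_ker hδ hPd hPδ (hbijker j (by omega)).injOn
      (hbijker (j + 1) hj).surjOn
  refine ⟨hacyc0, hacyc, exists_homologyEquiv_zero (hP 0) hPδ (hacyc0.le.trans map_le_range),
    fun j hj => ?_⟩
  obtain ⟨e, he⟩ := exists_homologyEquiv_succ (hP (j + 1)) hPδ ((hacyc j hj).le.trans map_le_range)
  exact ⟨e, fun x _ => he x⟩

/-- Let `(C^•, d, δ)` be a finite bi-graded complex of finite-dimensional
complex vector spaces (here `δ j : C (j+1) →ₗ C j` is the paper's `δ_{j+1}`, and `C^j = 0` for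
`j > n`), and let `P j : C^j → C^j` be linear projections commuting with both differentials.
If `Δ j` restricted to `ker (P j)` is bijective for every `j = 0, …, n` (expressed as
`Set.BijOn`), then the subcomplex `(ker P, δ)` is acyclic in every degree (degree `0`: since
`δ₀ = 0` there, `ker P₀ = δ₁ (ker P₁)`; degree `j+1 ≤ n`: `ker δ_{j+1} ∩ ker P_{j+1} =
δ_{j+2} (ker P_{j+2})`), and the inclusions `im P_j ↪ C^j` induce isomorphisms on homology:
for each degree there is a linear equivalence `e` from the homology of the subcomplex `im P`
(cycles modulo boundaries `δ (range P)`) to the homology of `C^•` (cycles `ker δ` — all of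
`C^0` in degree `0` — modulo boundaries `range δ`) sending the class of a cycle `x` of the
subcomplex to the class of `x` itself. -/
theorem subcomplex_ker_delta_acyclic_and_image_computes_homology
    (n : ℕ) (C : ℕ → Type) [∀ j, AddCommGroup (C j)] [∀ j, Module ℂ (C j)]
    [∀ j, FiniteDimensional ℂ (C j)]
    (hC : ∀ j, n < j → Subsingleton (C j))
    (d : ∀ j, C j →ₗ[ℂ] C (j + 1)) (δ : ∀ j, C (j + 1) →ₗ[ℂ] C j)
    (hd : ∀ j, (d (j + 1)).comp (d j) = 0)
    (hδ : ∀ j, (δ j).comp (δ (j + 1)) = 0)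
    (Δ : ∀ j, C j →ₗ[ℂ] C j)
    (hΔ0 : Δ 0 = (δ 0).comp (d 0))
    (hΔsucc : ∀ j, Δ (j + 1) = (δ (j + 1)).comp (d (j + 1)) + (d j).comp (δ j))
    (P : ∀ j, C j →ₗ[ℂ] C j)
    (hP : ∀ j, (P j).comp (P j) = P j)
    (hPd : ∀ j, (P (j + 1)).comp (d j) = (d j).comp (P j))
    (hPδ : ∀ j, (P j).comp (δ j) = (δ j).comp (P (j + 1)))
    (hbijker : ∀ j, j ≤ n →
      Set.BijOn ⇑(Δ j) (LinearMap.ker (P j) : Set (C j)) (LinearMap.ker (P j) : Set (C j))) :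
    (LinearMap.ker (P 0) = Submodule.map (δ 0) (LinearMap.ker (P 1))) ∧
    (∀ j, j + 1 ≤ n →
      LinearMap.ker (δ j) ⊓ LinearMap.ker (P (j + 1)) =
        Submodule.map (δ (j + 1)) (LinearMap.ker (P (j + 2)))) ∧
    (∃ e : (↥(LinearMap.range (P 0)) ⧸
              Submodule.comap (LinearMap.range (P 0)).subtype
                (Submodule.map (δ 0) (LinearMap.range (P 1))))
            ≃ₗ[ℂ] (C 0 ⧸ LinearMap.range (δ 0)),
      ∀ x : ↥(LinearMap.range (P 0)),
        e (Submodule.Quotient.mk x) = Submodule.Quotient.mk (x : C 0)) ∧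
    (∀ j, j + 1 ≤ n →
      ∃ e : (↥(LinearMap.ker (δ j) ⊓ LinearMap.range (P (j + 1))) ⧸
              Submodule.comap
                (LinearMap.ker (δ j) ⊓ LinearMap.range (P (j + 1))).subtype
                (Submodule.map (δ (j + 1)) (LinearMap.range (P (j + 2)))))
            ≃ₗ[ℂ] (↥(LinearMap.ker (δ j)) ⧸
              Submodule.comap (LinearMap.ker (δ j)).subtype (LinearMap.range (δ (j + 1)))),
        ∀ (x : ↥(LinearMap.ker (δ j) ⊓ LinearMap.range (P (j + 1))))
          (hx : (x : C (j + 1)) ∈ LinearMap.ker (δ j)),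
          e (Submodule.Quotient.mk x) =
            Submodule.Quotient.mk (⟨(x : C (j + 1)), hx⟩ : ↥(LinearMap.ker (δ j)))) :=
  subcomplex_ker_delta_acyclic_and_image_computes_homology_general n C d δ hδ Δ hΔ0 hΔsucc P hP hPd
    hPδ hbijker
end
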